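/- Let X and Y be finite alphabets, ε ∈ (0,1), let P and P̂ be joint probability distributions on X×Y, and set p* = (1−ε)P + ε·P̂ (pointwise mixture). Then |H(Y|X‖P) − H(Y|X‖p*)| ≤ ε·log|Y| + H₂(ε). -/

import Mathlib

open Real Finset

/-- Binary entropy function (base 2). -/
noncomputable def H2 (ε : ℝ) : ℝ :=
  -(ε * Real.logb 2 ε) - (1 - ε) * Real.logb 2 (1 - ε)

/-- `p` is a probability distribution on the finite alphabet `α`. -/
def IsProb {α : Type*} [Fintype α] (p : α → ℝ) : Prop :=
  (∀ a, 0 ≤ p a) ∧ ∑ a, p a = 1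

/-- `W` is a channel (stochastic matrix) from `X` to `Y`. -/
def IsChannel {X Y : Type*} [Fintype Y] (W : X → Y → ℝ) : Prop :=
  ∀ x, (∀ y, 0 ≤ W x y) ∧ ∑ y, W x y = 1

/-- Conditional entropy `H(Y|X‖P)` (base 2) of a joint distribution `P` on `X × Y`. -/
noncomputable def condEnt {X Y : Type*} [Fintype X] [Fintype Y] (P : X × Y → ℝ) : ℝ :=
  -∑ x : X, ∑ y : Y, P (x, y) * Real.logb 2 (P (x, y) / ∑ y' : Y, P (x, y'))

/-- Mutual information `I(U;Y‖P)` (base 2) of a joint distribution `P` on `U × Y`. -/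
noncomputable def mutInf {U Y : Type*} [Fintype U] [Fintype Y] (P : U × Y → ℝ) : ℝ :=
  ∑ u : U, ∑ y : Y,
    P (u, y) * Real.logb 2 (P (u, y) / ((∑ y' : Y, P (u, y')) * ∑ u' : U, P (u', y)))

/-- Channel distance `d(W,W') = max_x ∑_y |W(y|x) − W'(y|x)|`. -/
noncomputable def dChan {X Y : Type*} [Fintype Y] (W W' : X → Y → ℝ) : ℝ :=
  ⨆ x : X, ∑ y : Y, |W x y - W' x y|

/-!
Measured in nats, `H(Y|X) = H(X,Y) - H(X)`. Entropy is concave, and mixing two distributions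
with weights `1 - ε, ε` raises the entropy by at most `h(ε)` (subadditivity of `-t log t`);
applying both facts to the joint law and to the `X`-marginal pins `H(Y|X‖p*)` within `h(ε)` of
`(1 - ε) H(Y|X‖P) + ε H(Y|X‖P̂)`. Since every conditional entropy lies in `[0, log |Y|]`, the
theorem follows.
-/

noncomputable def natEntropy {α : Type*} [Fintype α] (q : α → ℝ) : ℝ :=
  ∑ a, negMulLog (q a)

def marginalFst {X Y : Type*} [Fintype Y] (P : X × Y → ℝ) (x : X) : ℝ :=
  ∑ y, P (x, y)

noncomputable def condEntNat {X Y : Type*} [Fintype X] [Fintype Y] (P : X × Y → ℝ) : ℝ :=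
  natEntropy P - natEntropy (marginalFst P)

lemma IsProb.marginalFst {X Y : Type*} [Fintype X] [Fintype Y] {P : X × Y → ℝ}
    (hP : IsProb P) : IsProb (marginalFst P) :=
  ⟨fun _ => sum_nonneg fun _ _ => hP.1 _, by rw [← hP.2, Fintype.sum_prod_type]; rfl⟩

lemma marginalFst_mix {X Y : Type*} [Fintype Y] (s t : ℝ) (P Q : X × Y → ℝ) :
    marginalFst (fun a => s * P a + t * Q a) =
      fun x => s * marginalFst P x + t * marginalFst Q x := by
  ext x
  simp only [marginalFst, sum_add_distrib, mul_sum]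

lemma negMulLog_add_le {a b : ℝ} (ha : 0 ≤ a) (hb : 0 ≤ b) :
    negMulLog (a + b) ≤ negMulLog a + negMulLog b := by
  have mul_log_le {c : ℝ} (hc : 0 ≤ c) (hcab : c ≤ a + b) :
      c * log c ≤ c * log (a + b) := by
    rcases hc.eq_or_lt with rfl | hc
    · simp
    · exact mul_le_mul_of_nonneg_left (log_le_log hc hcab) hc.le
  have := mul_log_le ha (by linarith)
  have := mul_log_le hb (by linarith)
  simp only [negMulLog, neg_mul]
  linarith [add_mul a b (log (a + b))]

lemma negMulLog_sum_le {ι : Type*} (s : Finset ι) {q : ι → ℝ} (hq : ∀ i, 0 ≤ q i) :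
    negMulLog (∑ i ∈ s, q i) ≤ ∑ i ∈ s, negMulLog (q i) :=
  le_sum_of_subadditive_on_pred negMulLog (0 ≤ ·) (by simp)
    (fun _ _ => negMulLog_add_le) (fun _ _ => add_nonneg) q fun i _ => hq i

/-- Jensen's inequality for the uniform weights `1 / |α|`. -/
lemma natEntropy_le_negMulLog_sum_add {α : Type*} [Fintype α] {q : α → ℝ}
    (hq : ∀ a, 0 ≤ q a) :
    natEntropy q ≤ negMulLog (∑ a, q a) + (∑ a, q a) * log (Fintype.card α) := by
  rcases isEmpty_or_nonempty α with hα | hα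
  · simp [natEntropy]
  set n : ℝ := (Fintype.card α : ℝ)
  have hn : 0 < n := by positivity
  have jensen : n⁻¹ * natEntropy q ≤ negMulLog (n⁻¹ * ∑ a, q a) := by
    simpa only [natEntropy, smul_eq_mul, ← mul_sum] using
      concaveOn_negMulLog.le_map_sum (t := univ) (w := fun _ => n⁻¹) (p := q)
        (fun _ _ => by positivity) (by simp [n, hn.ne']) (fun a _ => Set.mem_Ici.mpr (hq a))
  have scale : negMulLog (n⁻¹ * ∑ a, q a) =
      n⁻¹ * (negMulLog (∑ a, q a) + (∑ a, q a) * log n) := by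
    rw [negMulLog_mul, negMulLog, log_inv]
    ring
  rw [scale] at jensen
  exact le_of_mul_le_mul_left jensen (inv_pos.2 hn)

lemma natEntropy_mix_ge {α : Type*} [Fintype α] {s t : ℝ} (hs : 0 ≤ s) (ht : 0 ≤ t)
    (hst : s + t = 1) {q r : α → ℝ} (hq : ∀ a, 0 ≤ q a) (hr : ∀ a, 0 ≤ r a) :
    s * natEntropy q + t * natEntropy r ≤ natEntropy fun a => s * q a + t * r a := by
  rw [natEntropy, natEntropy, mul_sum, mul_sum, ← sum_add_distrib]
  exact sum_le_sum fun a _ => by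
    simpa using concaveOn_negMulLog.2 (hq a) (hr a) hs ht hst

lemma natEntropy_mix_le {α : Type*} [Fintype α] {s t : ℝ} (hs : 0 ≤ s) (ht : 0 ≤ t)
    {q r : α → ℝ} (hq : ∀ a, 0 ≤ q a) (hr : ∀ a, 0 ≤ r a) :
    natEntropy (fun a => s * q a + t * r a) ≤
      s * natEntropy q + t * natEntropy r + (∑ a, q a) * negMulLog s
        + (∑ a, r a) * negMulLog t :=
  calc natEntropy (fun a => s * q a + t * r a)
      ≤ ∑ a, (s * negMulLog (q a) + t * negMulLog (r a) + q a * negMulLog s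
          + r a * negMulLog t) := sum_le_sum fun a _ => by
        have := negMulLog_add_le (mul_nonneg hs (hq a)) (mul_nonneg ht (hr a))
        rw [negMulLog_mul, negMulLog_mul] at this
        linarith
    _ = _ := by simp only [natEntropy, sum_add_distrib, mul_sum, sum_mul]

lemma natEntropy_mix_le_add_binEntropy {α : Type*} [Fintype α] {ε : ℝ} (hε0 : 0 ≤ ε)
    (hε1 : ε ≤ 1) {q r : α → ℝ} (hq : IsProb q) (hr : IsProb r) :
    natEntropy (fun a => (1 - ε) * q a + ε * r a) ≤
      (1 - ε) * natEntropy q + ε * natEntropy r + binEntropy ε := by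
  have := natEntropy_mix_le (sub_nonneg.2 hε1) hε0 hq.1 hr.1
  rw [hq.2, hr.2] at this
  rw [binEntropy_eq_negMulLog_add_negMulLog_one_sub]
  linarith

lemma neg_sum_mul_log_div_sum {ι : Type*} (s : Finset ι) {q : ι → ℝ}
    (hq : ∀ i, 0 ≤ q i) :
    -∑ i ∈ s, q i * log (q i / ∑ j ∈ s, q j) =
      ∑ i ∈ s, negMulLog (q i) - negMulLog (∑ i ∈ s, q i) := by
  have split : ∀ i ∈ s, q i * log (q i / ∑ j ∈ s, q j) =
      q i * log (q i) - q i * log (∑ j ∈ s, q j) := fun i hi => by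
    rcases (hq i).eq_or_lt with h | h
    · simp [← h]
    · have hsum : q i ≤ ∑ j ∈ s, q j := single_le_sum (fun j _ => hq j) hi
      rw [log_div h.ne' (h.trans_le hsum).ne']
      ring
  rw [sum_congr rfl split, sum_sub_distrib, ← sum_mul]
  simp only [negMulLog, neg_mul, sum_neg_distrib]
  ring

lemma condEntNat_eq_sum {X Y : Type*} [Fintype X] [Fintype Y] (P : X × Y → ℝ) :
    condEntNat P =
      ∑ x, (natEntropy (fun y => P (x, y)) - negMulLog (marginalFst P x)) := by
  rw [condEntNat, natEntropy, Fintype.sum_prod_type, sum_sub_distrib]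
  rfl

lemma condEnt_eq_condEntNat_div {X Y : Type*} [Fintype X] [Fintype Y] {P : X × Y → ℝ}
    (hP : ∀ a, 0 ≤ P a) : condEnt P = condEntNat P / log 2 := by
  simp only [condEnt, condEntNat_eq_sum, logb, mul_div_assoc', ← sum_div]
  rw [← neg_div, ← sum_neg_distrib]
  exact congrArg (· / log 2) <| sum_congr rfl fun x _ =>
    neg_sum_mul_log_div_sum univ fun y => hP (x, y)

lemma H2_eq_binEntropy_div (ε : ℝ) : H2 ε = binEntropy ε / log 2 := by
  simp only [H2, binEntropy_eq_negMulLog_add_negMulLog_one_sub, negMulLog, logb]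
  ring

lemma condEntNat_nonneg {X Y : Type*} [Fintype X] [Fintype Y] {P : X × Y → ℝ}
    (hP : ∀ a, 0 ≤ P a) : 0 ≤ condEntNat P := by
  rw [condEntNat_eq_sum]
  exact sum_nonneg fun x _ =>
    sub_nonneg.2 (negMulLog_sum_le univ fun y => hP (x, y))

lemma condEntNat_le_log_card {X Y : Type*} [Fintype X] [Fintype Y] {P : X × Y → ℝ}
    (hP : IsProb P) : condEntNat P ≤ log (Fintype.card Y) := by
  rw [condEntNat_eq_sum]
  calc ∑ x, (natEntropy (fun y => P (x, y)) - negMulLog (marginalFst P x))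
      ≤ ∑ x, marginalFst P x * log (Fintype.card Y) := sum_le_sum fun x _ => by
        have := natEntropy_le_negMulLog_sum_add fun y => hP.1 (x, y)
        rw [marginalFst]
        linarith
    _ = log (Fintype.card Y) := by rw [← sum_mul, hP.marginalFst.2, one_mul]

lemma abs_condEntNat_mix_sub_le {X Y : Type*} [Fintype X] [Fintype Y] {ε : ℝ} (hε0 : 0 ≤ ε)
    (hε1 : ε ≤ 1) {P Q : X × Y → ℝ} (hP : IsProb P) (hQ : IsProb Q) :
    |condEntNat (fun a => (1 - ε) * P a + ε * Q a) -
        ((1 - ε) * condEntNat P + ε * condEntNat Q)| ≤ binEntropy ε := by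
  have joint_ge := natEntropy_mix_ge (sub_nonneg.2 hε1) hε0 (sub_add_cancel 1 ε) hP.1 hQ.1
  have joint_le := natEntropy_mix_le_add_binEntropy hε0 hε1 hP hQ
  have marg_ge := natEntropy_mix_ge (sub_nonneg.2 hε1) hε0 (sub_add_cancel 1 ε)
    hP.marginalFst.1 hQ.marginalFst.1
  have marg_le := natEntropy_mix_le_add_binEntropy hε0 hε1 hP.marginalFst hQ.marginalFst
  rw [condEntNat, condEntNat, condEntNat, marginalFst_mix, abs_le]
  constructor <;> linarith

lemma abs_condEntNat_sub_mix_le {X Y : Type*} [Fintype X] [Fintype Y] {ε : ℝ} (hε0 : 0 ≤ ε)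
    (hε1 : ε ≤ 1) {P Q : X × Y → ℝ} (hP : IsProb P) (hQ : IsProb Q) :
    |condEntNat P - condEntNat (fun a => (1 - ε) * P a + ε * Q a)| ≤
      ε * log (Fintype.card Y) + binEntropy ε := by
  set C := condEntNat (fun a => (1 - ε) * P a + ε * Q a)
  have hPQ : |condEntNat P - condEntNat Q| ≤ log (Fintype.card Y) :=
    abs_sub_le_of_nonneg_of_le (condEntNat_nonneg hP.1) (condEntNat_le_log_card hP)
      (condEntNat_nonneg hQ.1) (condEntNat_le_log_card hQ)
  set D := C - ((1 - ε) * condEntNat P + ε * condEntNat Q) with hD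
  calc |condEntNat P - C|
      = |ε * (condEntNat P - condEntNat Q) - D| := by rw [hD]; ring_nf
    _ ≤ |ε * (condEntNat P - condEntNat Q)| + |D| := abs_sub _ _
    _ ≤ ε * log (Fintype.card Y) + binEntropy ε := by
        rw [abs_mul, abs_of_nonneg hε0]
        exact add_le_add (mul_le_mul_of_nonneg_left hPQ hε0)
          (abs_condEntNat_mix_sub_le hε0 hε1 hP hQ)

/-- conditional entropy of an `ε`-mixture is close to that of the original. -/
theorem conditional_entropy_mixture_bound {X Y : Type*} [Fintype X] [Fintype Y]
    {ε : ℝ} (hε : ε ∈ Set.Ioo (0 : ℝ) 1)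
    (P Phat : X × Y → ℝ) (hP : IsProb P) (hPhat : IsProb Phat) :
    |condEnt P - condEnt (fun a : X × Y => (1 - ε) * P a + ε * Phat a)| ≤
      ε * Real.logb 2 (Fintype.card Y) + H2 ε := by
  obtain ⟨hε0, hε1⟩ := hε
  have hmix : ∀ a, 0 ≤ (1 - ε) * P a + ε * Phat a := fun a =>
    add_nonneg (mul_nonneg (by linarith) (hP.1 a)) (mul_nonneg hε0.le (hPhat.1 a))
  rw [condEnt_eq_condEntNat_div hP.1, condEnt_eq_condEntNat_div hmix, H2_eq_binEntropy_div,
    logb, ← sub_div, abs_div, abs_of_pos (log_pos one_lt_two), mul_div_assoc', ← add_div]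
  gcongr
  exact abs_condEntNat_sub_mix_le hε0.le hε1.le hP hPhat
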